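/- arXiv:0910.5098 — 4 statements merged into one kernel-verified Lean document; each statement's English description precedes it below -/
import Mathlib

section
/- Let n be a positive integer, A₋₁ an invertible n×n complex matrix with distinct eigenvalues μ₁,…,μ_ℓ, let A₂, A₃ : [-1,0] → ℂ^{n×n} have square-integrable entries, and let Δ(λ) be the characteristic matrix function. Let r > 0 satisfy 3r ≤ |λ_m^{(k)} − λ_i^{(j)}| for all pairs (m,k) ≠ (i,j), where λ_m^{(k)} = ln|μ_m| + i(arg μ_m + 2πk). Then the set of zeros of det Δ that lie outside the union over all m ∈ {1,…,ℓ} and all k ∈ ℤ of the closed discs of radius r centered at λ_m^{(k)} is finite. -/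
open MeasureTheory Complex Set Metric

/-- The characteristic matrix function `Δ(λ)` of the neutral type system. -/
noncomputable def Delta {n : ℕ} (Am1 : Matrix (Fin n) (Fin n) ℂ)
    (A2 A3 : ℝ → Matrix (Fin n) (Fin n) ℂ) (lam : ℂ) : Matrix (Fin n) (Fin n) ℂ :=
  (-lam) • (1 : Matrix (Fin n) (Fin n) ℂ)
    + (lam * Complex.exp (-lam)) • Am1
    + lam • Matrix.of (fun i j => ∫ s in Set.Ioc (-1:ℝ) 0, Complex.exp (lam * s) * A2 s i j)
    + Matrix.of (fun i j => ∫ s in Set.Ioc (-1:ℝ) 0, Complex.exp (lam * s) * A3 s i j)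

/-- The chain points `λ_m^{(k)} = ln|μ| + i(arg μ + 2πk)`. -/
noncomputable def chainPoint (μ : ℂ) (k : ℤ) : ℂ :=
  (Real.log ‖μ‖ : ℂ) + Complex.I * ((μ.arg : ℂ) + 2 * Real.pi * k)

open Filter Topology Bornology

/-!
`det Δ` is entire and not identically zero, so by the isolated zeros theorem it suffices that its
zeros outside the discs form a bounded set. Dominated convergence gives `finiteLaplace g z → 0` as
`Re z → +∞` and `e^z · finiteLaplace g z → 0` as `Re z → -∞`; hence `z⁻¹ Δ(z) → -1` and
`-(e^z / z) Δ(z) → -A₋₁`, both invertible, so all zeros lie in a vertical strip. If the zeros in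
the strip outside the discs were unbounded, `e^z` would cluster along them at some `c ≠ 0`. There
`Re z → log |c|` and `|Im z| → ∞`, so the Riemann–Lebesgue lemma gives `finiteLaplace g z → 0`
and `-(e^z / z) Δ(z) → c - A₋₁`. Thus `c` is an eigenvalue of `A₋₁`, and `e^z → c` forces `z`
into the discs of radius `r` around the chain points `log c + 2πik`.
-/

instance Bornology.isCountablyGenerated_cobounded {E : Type*} [SeminormedAddGroup E] :
    (cobounded E).IsCountablyGenerated := by
  rw [← comap_norm_atTop]
  infer_instance

theorem Differentiable.matrix_det {𝕜 ι : Type*} [NontriviallyNormedField 𝕜]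
    [Fintype ι] [DecidableEq ι] {F : 𝕜 → Matrix ι ι 𝕜}
    (hF : ∀ i j, Differentiable 𝕜 fun x => F x i j) :
    Differentiable 𝕜 fun x => (F x).det := by
  simp only [Matrix.det_apply']
  exact Differentiable.fun_sum fun σ _ =>
    (Differentiable.fun_finsetProd fun i _ => hF (σ i) i).const_mul _

theorem eventually_det_ne_zero_of_tendsto_smul {α ι R : Type*} [Fintype ι] [DecidableEq ι]
    [CommRing R] [Nontrivial R] [TopologicalSpace R] [IsTopologicalRing R] [T1Space R]
    {l : Filter α} {a : α → R} {F : α → Matrix ι ι R} {L : Matrix ι ι R}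
    (h : Tendsto (fun x => a x • F x) l (𝓝 L)) (hL : IsUnit L) :
    ∀ᶠ x in l, (F x).det ≠ 0 := by
  have hdet := ((continuous_id.matrix_det.tendsto L).comp h).eventually_ne
    ((Matrix.isUnit_iff_isUnit_det L).1 hL).ne_zero
  filter_upwards [hdet] with x hx hF
  simp [hF] at hx

theorem Differentiable.finite_inter_preimage_zero_of_isBounded {E : Type*}
    [NormedAddCommGroup E] [NormedSpace ℂ E] [CompleteSpace E] {f : ℂ → E}
    (hf : Differentiable ℂ f) {z₀ : ℂ} (hz₀ : f z₀ ≠ 0) {s : Set ℂ} (hs : IsBounded s) :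
    (s ∩ f ⁻¹' {0}).Finite := by
  have hcodiscrete : ∀ᶠ z in codiscreteWithin univ, f z ≠ 0 :=
    (AnalyticOnNhd.eqOn_zero_or_eventually_ne_zero_of_preconnected (fun z _ => hf.analyticAt z)
      isPreconnected_univ).resolve_left fun h => hz₀ (h (mem_univ z₀))
  refine (hs.isCompact_closure.finite_sdiff_of_mem_codiscreteWithin
    (codiscreteWithin_mono (subset_univ _) hcodiscrete)).subset ?_
  rintro z ⟨hzs, hz⟩
  exact ⟨subset_closure hzs, fun hne => hne hz⟩

theorem comap_re_atTop_le_cobounded : comap re atTop ≤ cobounded ℂ := by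
  rw [← comap_norm_atTop, ← tendsto_id']
  exact tendsto_comap_iff.2 (tendsto_atTop_mono re_le_norm tendsto_comap)

theorem comap_re_atBot_le_cobounded : comap re atBot ≤ cobounded ℂ := by
  rw [← comap_norm_atTop, ← tendsto_id']
  exact tendsto_comap_iff.2 <|
    tendsto_atTop_mono (fun z => (neg_le_abs z.re).trans (abs_re_le_norm z))
      (tendsto_neg_atBot_atTop.comp tendsto_comap)

theorem exists_ne_zero_comap_exp_nhds_inf_neBot {F : Filter ℂ} [F.NeBot] {B : ℝ}
    (hF : ∀ᶠ z in F, |z.re| ≤ B) : ∃ c ≠ 0, (comap exp (𝓝 c) ⊓ F).NeBot := by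
  have hexp : Tendsto exp F (𝓟 (closedBall 0 (Real.exp B) \ ball 0 (Real.exp (-B)))) := by
    refine tendsto_principal.2 (hF.mono fun z hz => ?_)
    simp only [Set.mem_sdiff, mem_closedBall_zero_iff, mem_ball_zero_iff, norm_exp, not_lt,
      Real.exp_le_exp]
    exact ⟨(abs_le.1 hz).2, (abs_le.1 hz).1⟩
  obtain ⟨c, hcK, hc⟩ := ((isCompact_closedBall _ _).diff isOpen_ball).exists_mapClusterPt hexp
  exact ⟨c, fun h => hcK.2 (h ▸ mem_ball_self (Real.exp_pos _)), neBot_inf_comap_iff_map'.2 hc⟩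

theorem tendsto_re_of_tendsto_exp {l : Filter ℂ} {c : ℂ} (hc : c ≠ 0)
    (h : Tendsto exp l (𝓝 c)) : Tendsto re l (𝓝 (Real.log ‖c‖)) :=
  ((Real.continuousAt_log (norm_ne_zero_iff.2 hc)).tendsto.comp h.norm).congr fun z => by
    simp [norm_exp]

theorem tendsto_im_cocompact_of_tendsto_re {l : Filter ℂ} {x : ℝ} (hl : l ≤ cobounded ℂ)
    (h : Tendsto re l (𝓝 x)) : Tendsto im l (cocompact ℝ) := by
  rw [← Metric.cobounded_eq_cocompact, ← comap_norm_atTop, tendsto_comap_iff]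
  have hre : ∀ᶠ z in l, |z.re| ≤ |x| + 1 :=
    h.abs.eventually (ge_mem_nhds (lt_add_one |x|))
  refine tendsto_atTop_mono' l (hre.mono fun z hz => ?_)
    (tendsto_atTop_add_const_right l (-(|x| + 1)) (tendsto_norm_cobounded_atTop.mono_left hl))
  have := norm_le_abs_re_add_abs_im z
  simp only [Function.comp, Real.norm_eq_abs]
  linarith

theorem chainPoint_eq_log_add (w : ℂ) (k : ℤ) : chainPoint w k = log w + k * (2 * Real.pi * I) := by
  rw [chainPoint, log]
  ring

theorem eventually_exists_norm_sub_chainPoint_lt {l : Filter ℂ} {w : ℂ} (hw : w ≠ 0)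
    (h : Tendsto exp l (𝓝 w)) {ε : ℝ} (hε : 0 < ε) :
    ∀ᶠ z in l, ∃ k : ℤ, ‖z - chainPoint w k‖ < ε := by
  have hlog : Tendsto (fun z => log (exp z / w)) l (𝓝 0) := by
    have hdiv := h.div_const w
    rw [div_self hw] at hdiv
    rw [← log_one]
    exact (continuousAt_clog one_mem_slitPlane).tendsto.comp hdiv
  filter_upwards [Metric.tendsto_nhds.1 hlog ε hε] with z hz
  have hexp : exp (z - log w) = exp (log (exp z / w)) := by
    rw [exp_sub, exp_log hw, exp_log (div_ne_zero (exp_ne_zero z) hw)]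
  obtain ⟨k, hk⟩ := exp_eq_exp_iff_exists_int.1 hexp
  refine ⟨k, ?_⟩
  have hsub : z - chainPoint w k = log (exp z / w) := by
    rw [chainPoint_eq_log_add]
    linear_combination hk
  rwa [hsub, ← dist_zero_right]

noncomputable def finiteLaplace (g : ℝ → ℂ) (z : ℂ) : ℂ :=
  ∫ s in Ioc (-1:ℝ) 0, exp (z * s) * g s

section finiteLaplace

variable {g : ℝ → ℂ}

theorem norm_exp_mul_ofReal (z : ℂ) (s : ℝ) : ‖exp (z * s)‖ = Real.exp (z.re * s) := by
  rw [norm_exp, re_mul_ofReal]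

theorem norm_exp_mul_ofReal_le_of_mem_Ioc (z : ℂ) {s : ℝ} (hs : s ∈ Ioc (-1:ℝ) 0) :
    ‖exp (z * s)‖ ≤ Real.exp |z.re| := by
  rw [norm_exp_mul_ofReal, Real.exp_le_exp]
  calc z.re * s ≤ |z.re * s| := le_abs_self _
    _ = |z.re| * |s| := abs_mul _ _
    _ ≤ |z.re| * 1 := by gcongr; exact abs_le.2 ⟨hs.1.le, hs.2.trans zero_le_one⟩
    _ = |z.re| := mul_one _

theorem integrableOn_exp_mul (hg : IntegrableOn g (Ioc (-1) 0)) (z : ℂ) :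
    IntegrableOn (fun s : ℝ => exp (z * s) * g s) (Ioc (-1) 0) :=
  hg.bdd_mul (by fun_prop : Continuous fun s : ℝ => exp (z * s)).aestronglyMeasurable
    ((ae_restrict_mem measurableSet_Ioc).mono fun _ hs => norm_exp_mul_ofReal_le_of_mem_Ioc z hs)

theorem tendsto_setIntegral_mul_of_tendsto_zero {α : Type*} {l : Filter α}
    [l.IsCountablyGenerated] {a b C : ℝ} {φ : α → ℝ → ℂ} (hg : IntegrableOn g (Ioc a b))
    (hφ : ∀ x, Continuous (φ x)) (hbound : ∀ᶠ x in l, ∀ s ∈ Ioc a b, ‖φ x s‖ ≤ C)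
    (hlim : ∀ s ∈ Ioo a b, Tendsto (φ · s) l (𝓝 0)) :
    Tendsto (fun x => ∫ s in Ioc a b, φ x s * g s) l (𝓝 0) := by
  have hIoo : ∀ᵐ s ∂volume.restrict (Ioc a b), s ∈ Ioo a b := by
    rw [← Measure.restrict_congr_set Ioo_ae_eq_Ioc]
    exact ae_restrict_mem measurableSet_Ioo
  have := tendsto_integral_filter_of_dominated_convergence (G := ℂ) (F := fun x s => φ x s * g s)
    (fun s => C * ‖g s‖)
    (Eventually.of_forall fun x => (hφ x).aestronglyMeasurable.mul hg.aestronglyMeasurable)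
    (hbound.mono fun x hx => (ae_restrict_mem measurableSet_Ioc).mono fun s hs => by
      rw [norm_mul]
      exact mul_le_mul_of_nonneg_right (hx s hs) (norm_nonneg _))
    (hg.norm.const_mul C)
    (hIoo.mono fun s hs => by simpa using (hlim s hs).mul_const (g s))
  simpa using this

theorem differentiable_finiteLaplace (hg : IntegrableOn g (Ioc (-1) 0)) :
    Differentiable ℂ (finiteLaplace g) := fun z₀ => by
  have hbound : ∀ᵐ (s : ℝ) ∂volume.restrict (Ioc (-1:ℝ) 0), ∀ z ∈ ball z₀ 1,
      ‖(s : ℂ) * exp (z * s) * g s‖ ≤ Real.exp (‖z₀‖ + 1) * ‖g s‖ := by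
    filter_upwards [ae_restrict_mem measurableSet_Ioc] with s hs z hz
    have hs1 : ‖(s : ℂ)‖ ≤ 1 := by
      rw [norm_real, Real.norm_eq_abs]
      exact abs_le.2 ⟨hs.1.le, hs.2.trans zero_le_one⟩
    have hz1 : |z.re| ≤ ‖z₀‖ + 1 := by
      linarith [abs_re_le_norm z, norm_le_norm_add_norm_sub' z z₀, mem_ball_iff_norm.1 hz]
    rw [norm_mul, norm_mul]
    gcongr
    calc ‖(s : ℂ)‖ * ‖exp (z * s)‖ ≤ 1 * Real.exp |z.re| :=
          mul_le_mul hs1 (norm_exp_mul_ofReal_le_of_mem_Ioc z hs) (norm_nonneg _) zero_le_one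
      _ ≤ Real.exp (‖z₀‖ + 1) := by rw [one_mul, Real.exp_le_exp]; exact hz1
  refine (hasDerivAt_integral_of_dominated_loc_of_deriv_le (E := ℂ)
    (F' := fun z (s : ℝ) => (s : ℂ) * exp (z * s) * g s) (ball_mem_nhds z₀ one_pos)
    (Eventually.of_forall fun z => (integrableOn_exp_mul hg z).aestronglyMeasurable)
    (integrableOn_exp_mul hg z₀)
    ((by fun_prop : Continuous fun s : ℝ => (s : ℂ) * exp (z₀ * s)).aestronglyMeasurable.mul
      hg.aestronglyMeasurable) hbound (hg.norm.const_mul _)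
    (Eventually.of_forall fun s z _ => ?_)).2.differentiableAt
  exact ((hasDerivAt_mul_const (s : ℂ)).cexp.mul_const (g s)).congr_deriv (by ring)

theorem tendsto_finiteLaplace_comap_re_atTop (hg : IntegrableOn g (Ioc (-1) 0)) :
    Tendsto (finiteLaplace g) (comap re atTop) (𝓝 0) := by
  refine tendsto_setIntegral_mul_of_tendsto_zero (C := 1) hg (fun z => by fun_prop) ?_ ?_
  · filter_upwards [tendsto_comap.eventually_ge_atTop 0] with z hz s hs
    rw [norm_exp_mul_ofReal]
    exact Real.exp_le_one_iff.2 (mul_nonpos_of_nonneg_of_nonpos hz hs.2)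
  · intro s hs
    rw [tendsto_exp_nhds_zero_iff]
    simpa only [re_mul_ofReal] using (tendsto_comap (f := re)).atTop_mul_const_of_neg hs.2

theorem tendsto_exp_mul_finiteLaplace_comap_re_atBot (hg : IntegrableOn g (Ioc (-1) 0)) :
    Tendsto (fun z => exp z * finiteLaplace g z) (comap re atBot) (𝓝 0) := by
  have hshift : ∀ z, exp z * finiteLaplace g z =
      ∫ s in Ioc (-1:ℝ) 0, exp (z * ((s + 1 : ℝ) : ℂ)) * g s := by
    intro z
    rw [finiteLaplace, ← integral_const_mul]
    congr 1 with s
    rw [← mul_assoc, ← exp_add]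
    push_cast
    ring_nf
  simp_rw [hshift]
  refine tendsto_setIntegral_mul_of_tendsto_zero (C := 1) hg (fun z => by fun_prop) ?_ ?_
  · filter_upwards [tendsto_comap.eventually_le_atBot 0] with z hz s hs
    rw [norm_exp_mul_ofReal]
    exact Real.exp_le_one_iff.2 (mul_nonpos_of_nonpos_of_nonneg hz (by linarith [hs.1]))
  · intro s hs
    rw [tendsto_exp_nhds_zero_iff]
    simpa only [re_mul_ofReal] using
      (tendsto_comap (f := re)).atBot_mul_const (by linarith [hs.1] : (0:ℝ) < s + 1)

/- No integrability hypothesis is needed: if `s ↦ e^{xs} g s` is not integrable on `(-1, 0]`,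
every value on the line `Re z = x` is the junk value `0`. -/
theorem tendsto_finiteLaplace_add_mul_I_cocompact (x : ℝ) :
    Tendsto (fun y : ℝ => finiteLaplace g (x + y * I)) (cocompact ℝ) (𝓝 0) := by
  have hscale : Tendsto (fun y : ℝ => -(2 * Real.pi)⁻¹ * y) (cocompact ℝ) (cocompact ℝ) :=
    tendsto_cocompact_mul_left₀ (by simp [Real.pi_ne_zero])
  refine ((Real.tendsto_integral_exp_smul_cocompact
    (indicator (Ioc (-1:ℝ) 0) fun s => exp (x * s) * g s)).comp hscale).congr fun y => ?_
  rw [Function.comp_apply, finiteLaplace, ← integral_indicator measurableSet_Ioc]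
  congr 1 with s
  by_cases hs : s ∈ Ioc (-1:ℝ) 0
  · simp only [indicator_of_mem hs, Circle.smul_def, Real.fourierChar_apply, smul_eq_mul]
    rw [← mul_assoc, ← exp_add]
    congr 2
    push_cast
    field_simp
    ring
  · simp [indicator_of_notMem hs]

theorem tendsto_finiteLaplace_of_tendsto_re {l : Filter ℂ} [l.IsCountablyGenerated] {x : ℝ}
    (hg : IntegrableOn g (Ioc (-1) 0)) (hre : Tendsto re l (𝓝 x))
    (him : Tendsto im l (cocompact ℝ)) :
    Tendsto (finiteLaplace g) l (𝓝 0) := by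
  -- Compare with the value on the line `Re z = x`, where the Riemann–Lebesgue lemma applies.
  have hsub : ∀ z : ℂ, finiteLaplace g z - finiteLaplace g (x + z.im * I) =
      ∫ s in Ioc (-1:ℝ) 0, (exp (z * s) - exp ((x + z.im * I) * s)) * g s := by
    intro z
    rw [finiteLaplace, finiteLaplace,
      ← integral_sub (integrableOn_exp_mul hg z) (integrableOn_exp_mul hg _)]
    simp_rw [sub_mul]
  have hfactor : ∀ (z : ℂ) (s : ℝ), exp (z * s) - exp ((x + z.im * I) * s) =
      exp ((x + z.im * I) * s) * (exp (((z.re - x) * s : ℝ)) - 1) := by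
    intro z s
    rw [mul_sub, mul_one, ← exp_add]
    congr 2
    push_cast
    linear_combination (-(s : ℂ)) * re_add_im z
  have hdiff : Tendsto (fun z => finiteLaplace g z - finiteLaplace g (x + z.im * I)) l (𝓝 0) := by
    simp_rw [hsub]
    refine tendsto_setIntegral_mul_of_tendsto_zero (C := Real.exp (|x| + 1) + Real.exp |x|) hg
      (fun z => by fun_prop) ?_ fun s _ => ?_
    · filter_upwards [hre.abs.eventually (ge_mem_nhds (lt_add_one |x|))] with z hz s hs
      refine (norm_sub_le _ _).trans (add_le_add ?_ ?_)
      · exact (norm_exp_mul_ofReal_le_of_mem_Ioc z hs).trans (Real.exp_le_exp.2 hz)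
      · simpa using norm_exp_mul_ofReal_le_of_mem_Ioc (x + z.im * I) hs
    · rw [tendsto_zero_iff_norm_tendsto_zero]
      simp_rw [hfactor, norm_mul, norm_exp_mul_ofReal]
      have hcont : Continuous fun t : ℝ => ‖exp (((t - x) * s : ℝ)) - 1‖ := by fun_prop
      simpa using ((hcont.tendsto x).comp hre).const_mul (Real.exp (x * s))
  simpa using hdiff.add ((tendsto_finiteLaplace_add_mul_I_cocompact (g := g) x).comp him)

end finiteLaplace

section Delta

variable {n : ℕ} {A : Matrix (Fin n) (Fin n) ℂ} {A2 A3 : ℝ → Matrix (Fin n) (Fin n) ℂ}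

theorem Delta_apply (z : ℂ) (i j : Fin n) :
    Delta A A2 A3 z i j = -z * (1 : Matrix (Fin n) (Fin n) ℂ) i j + z * exp (-z) * A i j
      + z * finiteLaplace (fun s => A2 s i j) z + finiteLaplace (fun s => A3 s i j) z :=
  rfl

theorem differentiable_det_Delta
    (hA2 : ∀ i j, IntegrableOn (fun s => A2 s i j) (Ioc (-1) 0))
    (hA3 : ∀ i j, IntegrableOn (fun s => A3 s i j) (Ioc (-1) 0)) :
    Differentiable ℂ fun z => (Delta A A2 A3 z).det :=
  Differentiable.matrix_det fun i j => by
    have h2 := differentiable_finiteLaplace (hA2 i j)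
    have h3 := differentiable_finiteLaplace (hA3 i j)
    simp only [Delta_apply]
    fun_prop

theorem eventually_det_Delta_ne_zero_comap_re_atTop
    (hA2 : ∀ i j, IntegrableOn (fun s => A2 s i j) (Ioc (-1) 0))
    (hA3 : ∀ i j, IntegrableOn (fun s => A3 s i j) (Ioc (-1) 0)) :
    ∀ᶠ z in comap re atTop, (Delta A A2 A3 z).det ≠ 0 := by
  refine eventually_det_ne_zero_of_tendsto_smul (a := fun z => z⁻¹) ?_ isUnit_one.neg
  have hinv : Tendsto (fun z : ℂ => z⁻¹) (comap re atTop) (𝓝 0) :=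
    tendsto_inv₀_cobounded.mono_left comap_re_atTop_le_cobounded
  have hexp : Tendsto (fun z => exp (-z)) (comap re atTop) (𝓝 0) :=
    tendsto_exp_nhds_zero_iff.2 (by simpa using tendsto_comap)
  have hne : ∀ᶠ z in comap re atTop, z ≠ 0 :=
    (tendsto_comap.eventually_gt_atTop 0).mono fun z hz h => by simp [h] at hz
  refine tendsto_pi_nhds.2 fun i => tendsto_pi_nhds.2 fun j => ?_
  have key := (((tendsto_const_nhds (x := -(1 : Matrix (Fin n) (Fin n) ℂ) i j)).add
    (hexp.mul_const (A i j))).add (tendsto_finiteLaplace_comap_re_atTop (hA2 i j))).add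
    (hinv.mul (tendsto_finiteLaplace_comap_re_atTop (hA3 i j)))
  simp only [zero_mul, add_zero] at key
  refine key.congr' (hne.mono fun z hz => ?_)
  simp only [Matrix.smul_apply, smul_eq_mul, Delta_apply]
  field_simp

theorem eventually_det_Delta_ne_zero_of_tendsto_exp {l : Filter ℂ} {c : ℂ}
    (hl : l ≤ cobounded ℂ) (hc : c ∉ spectrum ℂ A) (hexp : Tendsto exp l (𝓝 c))
    (h2 : ∀ i j, Tendsto (fun z => exp z * finiteLaplace (fun s => A2 s i j) z) l (𝓝 0))
    (h3 : ∀ i j, Tendsto (fun z => exp z * finiteLaplace (fun s => A3 s i j) z) l (𝓝 0)) :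
    ∀ᶠ z in l, (Delta A A2 A3 z).det ≠ 0 := by
  refine eventually_det_ne_zero_of_tendsto_smul (a := fun z => -(exp z / z)) ?_
    (spectrum.notMem_iff.1 hc)
  have hinv := tendsto_inv₀_cobounded.mono_left hl
  have hne : ∀ᶠ z in l, z ≠ 0 :=
    ((tendsto_norm_cobounded_atTop.mono_left hl).eventually_gt_atTop 0).mono
      fun z hz => norm_pos_iff.1 hz
  refine tendsto_pi_nhds.2 fun i => tendsto_pi_nhds.2 fun j => ?_
  have key := (((hexp.mul_const ((1 : Matrix (Fin n) (Fin n) ℂ) i j)).sub_const (A i j)).sub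
    (h2 i j)).sub (hinv.mul (h3 i j))
  simp only [zero_mul, sub_zero] at key
  rw [Algebra.algebraMap_eq_smul_one]
  refine key.congr' (hne.mono fun z hz => ?_)
  simp only [Matrix.smul_apply, smul_eq_mul, Delta_apply, exp_neg]
  field_simp
  ring

theorem eventually_det_Delta_ne_zero_comap_re_atBot (hA : IsUnit A)
    (hA2 : ∀ i j, IntegrableOn (fun s => A2 s i j) (Ioc (-1) 0))
    (hA3 : ∀ i j, IntegrableOn (fun s => A3 s i j) (Ioc (-1) 0)) :
    ∀ᶠ z in comap re atBot, (Delta A A2 A3 z).det ≠ 0 :=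
  eventually_det_Delta_ne_zero_of_tendsto_exp comap_re_atBot_le_cobounded
    (spectrum.zero_notMem_iff ℂ |>.2 hA) tendsto_exp_comap_re_atBot
    (fun i j => tendsto_exp_mul_finiteLaplace_comap_re_atBot (hA2 i j))
    (fun i j => tendsto_exp_mul_finiteLaplace_comap_re_atBot (hA3 i j))

theorem exists_abs_re_le_of_det_Delta_eq_zero (hA : IsUnit A)
    (hA2 : ∀ i j, IntegrableOn (fun s => A2 s i j) (Ioc (-1) 0))
    (hA3 : ∀ i j, IntegrableOn (fun s => A3 s i j) (Ioc (-1) 0)) :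
    ∃ B, ∀ z, (Delta A A2 A3 z).det = 0 → |z.re| ≤ B := by
  obtain ⟨R₁, hR₁⟩ := eventually_atTop.1
    (eventually_comap.1 (eventually_det_Delta_ne_zero_comap_re_atTop hA2 hA3))
  obtain ⟨R₂, hR₂⟩ := eventually_atBot.1
    (eventually_comap.1 (eventually_det_Delta_ne_zero_comap_re_atBot hA hA2 hA3))
  refine ⟨max R₁ (-R₂), fun z hz => abs_le.2 ⟨?_, ?_⟩⟩
  · by_contra h
    exact hR₂ z.re (by linarith [le_max_right R₁ (-R₂)]) z rfl hz
  · by_contra h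
    exact hR₁ z.re (by linarith [le_max_left R₁ (-R₂)]) z rfl hz

theorem isBounded_zeros_det_Delta_outside_discs
    (hA2 : ∀ i j, IntegrableOn (fun s => A2 s i j) (Ioc (-1) 0))
    (hA3 : ∀ i j, IntegrableOn (fun s => A3 s i j) (Ioc (-1) 0)) {r : ℝ} (hr : 0 < r) (B : ℝ) :
    IsBounded {z | (Delta A A2 A3 z).det = 0 ∧ |z.re| ≤ B ∧
      ∀ w ∈ spectrum ℂ A, ∀ k : ℤ, z ∉ closedBall (chainPoint w k) r} := by
  set s := {z | (Delta A A2 A3 z).det = 0 ∧ |z.re| ≤ B ∧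
      ∀ w ∈ spectrum ℂ A, ∀ k : ℤ, z ∉ closedBall (chainPoint w k) r}
  rw [isBounded_def]
  by_contra hs
  have : (cobounded ℂ ⊓ 𝓟 s).NeBot := frequently_iff_neBot.1 hs
  have hFs : ∀ᶠ z in cobounded ℂ ⊓ 𝓟 s, z ∈ s := mem_inf_of_right (mem_principal_self s)
  obtain ⟨c, hc0, hG⟩ := exists_ne_zero_comap_exp_nhds_inf_neBot (hFs.mono fun _ hz => hz.2.1)
  set G := comap exp (𝓝 c) ⊓ (cobounded ℂ ⊓ 𝓟 s)
  have hexp : Tendsto exp G (𝓝 c) := tendsto_comap.mono_left inf_le_left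
  have hGb : G ≤ cobounded ℂ := inf_le_right.trans inf_le_left
  have hre := tendsto_re_of_tendsto_exp hc0 hexp
  have him := tendsto_im_cocompact_of_tendsto_re hGb hre
  have hGs : ∀ᶠ z in G, z ∈ s := mem_inf_of_right hFs
  have hGs' : ∀ᶠ z in G, z ∉ s := by
    by_cases hcσ : c ∈ spectrum ℂ A
    · filter_upwards [eventually_exists_norm_sub_chainPoint_lt hc0 hexp hr] with z ⟨k, hk⟩ hz
      exact hz.2.2 c hcσ k (mem_closedBall_iff_norm.2 hk.le)
    · have hlim : ∀ {g}, IntegrableOn g (Ioc (-1) 0) →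
          Tendsto (fun z => exp z * finiteLaplace g z) G (𝓝 0) := fun hg => by
        simpa using hexp.mul (tendsto_finiteLaplace_of_tendsto_re hg hre him)
      filter_upwards [eventually_det_Delta_ne_zero_of_tendsto_exp hGb hcσ hexp
        (fun i j => hlim (hA2 i j)) (fun i j => hlim (hA3 i j))] with z hz hzs
      exact hz hzs.1
  obtain ⟨z, hz, hz'⟩ := (hGs.and hGs').exists
  exact hz' hz

end Delta

theorem zeros_outside_discs_finite_general
    (n ℓ : ℕ) (Am1 : Matrix (Fin n) (Fin n) ℂ)
    (hinv : IsUnit Am1)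
    (μ : Fin ℓ → ℂ)
    (hspec : spectrum ℂ Am1 = Set.range μ)
    (A2 A3 : ℝ → Matrix (Fin n) (Fin n) ℂ)
    (hA2 : ∀ i j, MeasureTheory.MemLp (fun θ => A2 θ i j) 2
      (volume.restrict (Set.Ioc (-1:ℝ) 0)))
    (hA3 : ∀ i j, MeasureTheory.MemLp (fun θ => A3 θ i j) 2
      (volume.restrict (Set.Ioc (-1:ℝ) 0)))
    (r : ℝ) (hr : 0 < r) :
    {z : ℂ | (Delta Am1 A2 A3 z).det = 0 ∧
      ∀ (m : Fin ℓ) (k : ℤ), z ∉ closedBall (chainPoint (μ m) k) r}.Finite := by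
  have hA2' i j : IntegrableOn (fun θ => A2 θ i j) (Ioc (-1) 0) := (hA2 i j).integrable one_le_two
  have hA3' i j : IntegrableOn (fun θ => A3 θ i j) (Ioc (-1) 0) := (hA3 i j).integrable one_le_two
  obtain ⟨B, hB⟩ := exists_abs_re_le_of_det_Delta_eq_zero hinv hA2' hA3'
  have hB1 : (Delta Am1 A2 A3 (B + 1 : ℝ)).det ≠ 0 := fun h => by
    have := hB _ h
    rw [ofReal_re] at this
    linarith [le_abs_self (B + 1)]
  refine ((differentiable_det_Delta hA2' hA3').finite_inter_preimage_zero_of_isBounded hB1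
    (isBounded_zeros_det_Delta_outside_discs (A := Am1) hA2' hA3' hr B)).subset ?_
  rintro z ⟨hz, hdisc⟩
  refine ⟨⟨hz, hB z hz, fun w hw k => ?_⟩, hz⟩
  obtain ⟨m, rfl⟩ := hspec ▸ hw
  exact hdisc m k

theorem zeros_outside_discs_finite
    (n ℓ : ℕ) (hn : 0 < n) (Am1 : Matrix (Fin n) (Fin n) ℂ)
    (hinv : IsUnit Am1)
    (μ : Fin ℓ → ℂ) (hμinj : Function.Injective μ)
    (hspec : spectrum ℂ Am1 = Set.range μ)
    (A2 A3 : ℝ → Matrix (Fin n) (Fin n) ℂ)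
    (hA2 : ∀ i j, MeasureTheory.MemLp (fun θ => A2 θ i j) 2
      (volume.restrict (Set.Ioc (-1:ℝ) 0)))
    (hA3 : ∀ i j, MeasureTheory.MemLp (fun θ => A3 θ i j) 2
      (volume.restrict (Set.Ioc (-1:ℝ) 0)))
    (r : ℝ) (hr : 0 < r)
    (hsep : ∀ (m i : Fin ℓ) (k j : ℤ), (m, k) ≠ (i, j) →
      3 * r ≤ ‖chainPoint (μ m) k - chainPoint (μ i) j‖) :
    {z : ℂ | (Delta Am1 A2 A3 z).det = 0 ∧
      ∀ (m : Fin ℓ) (k : ℤ), z ∉ closedBall (chainPoint (μ m) k) r}.Finite :=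
  zeros_outside_discs_finite_general n ℓ Am1 hinv μ hspec A2 A3 hA2 hA3 r hr
end

section
/- Let n be a positive integer, A₋₁ an n×n complex matrix, A₂, A₃ : [-1,0] → ℂ^{n×n} matrix-valued functions with square-integrable entries, and Δ(λ) the characteristic matrix function. Then the following are equivalent: (a) there exists α > 0 such that every λ ∈ ℂ with det Δ(λ) = 0 satisfies Re λ ≤ −α; (b) every λ ∈ ℂ with det Δ(λ) = 0 satisfies Re λ < 0, and every eigenvalue μ of A₋₁ satisfies |μ| < 1. -/
/-!
For `z ≠ 0` one has `Δ(z) = -z (1 - e^{-z} A₋₁ - R(z))`, and by the Riemann–Lebesgue lemma the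
remainder `R(z)` tends to `0` as `|Im z| → ∞` with `Re z` converging.

(b) ⇒ (a): if the spectrum of `A₋₁` lies in the open unit disc, `1 - w A₋₁ - E` stays invertible
for `|w|` slightly larger than `1` and `E` small, so `det Δ` has no zeros with `|Re z|` small and
`|Im z|` large. Since `det Δ` does not vanish on the imaginary axis, compactness closes the gap
and gives a whole strip `|Re z| < ε` free of zeros.

(a) ⇒ (b): if `μ` is an eigenvalue with `|μ| ≥ 1`, then `z₀ = log μ` is an isolated zero of the
`2πi`-periodic function `det (1 - e^{-z} A₋₁)`. The translates `z ↦ det Δ(z + 2πik) / (-(z + 2πik))ⁿ`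
converge to it uniformly near `z₀`, so by the minimum modulus principle `det Δ` has zeros whose
real parts come arbitrarily close to `Re z₀ = log |μ| ≥ 0`.
-/

open MeasureTheory Complex Set

open Filter Metric Topology
open scoped Real

lemma tendsto_integral_cexp_mul_I_cocompact (f : ℝ → ℂ) :
    Tendsto (fun t : ℝ => ∫ s : ℝ, cexp (t * s * I) * f s) (cocompact ℝ) (𝓝 0) := by
  have hscale : Tendsto (fun t : ℝ => -(2 * π)⁻¹ * t) (cocompact ℝ) (cocompact ℝ) :=
    (Homeomorph.mulLeft₀ _ (by simp [Real.pi_ne_zero])).map_cocompact.le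
  convert (Real.tendsto_integral_exp_smul_cocompact f).comp hscale using 1
  ext t
  refine integral_congr_ae (.of_forall fun s => ?_)
  dsimp only
  rw [Circle.smul_def, Real.fourierChar_apply]
  congr 2
  push_cast
  field_simp

lemma abs_le_one_of_mem_Ioc {s : ℝ} (hs : s ∈ Ioc (-1:ℝ) 0) : |s| ≤ 1 :=
  abs_le.2 ⟨hs.1.le, hs.2.trans zero_le_one⟩

lemma norm_cexp_mul_le {s : ℝ} (hs : s ∈ Ioc (-1:ℝ) 0) (z : ℂ) :
    ‖cexp (z * s)‖ ≤ Real.exp |z.re| := by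
  rw [norm_exp, Real.exp_le_exp, re_mul_ofReal]
  calc z.re * s ≤ |z.re * s| := le_abs_self _
    _ = |z.re| * |s| := abs_mul _ _
    _ ≤ |z.re| * 1 := by gcongr; exact abs_le_one_of_mem_Ioc hs
    _ = |z.re| := mul_one _

noncomputable def laplaceIoc (g : ℝ → ℂ) (z : ℂ) : ℂ :=
  ∫ s in Ioc (-1:ℝ) 0, cexp (z * s) * g s

section
variable {g : ℝ → ℂ} (hg : IntegrableOn g (Ioc (-1:ℝ) 0))
include hg

lemma integrableOn_cexp_mul (z : ℂ) :
    IntegrableOn (fun s : ℝ => cexp (z * s) * g s) (Ioc (-1:ℝ) 0) := by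
  refine hg.bdd_mul (c := Real.exp |z.re|) (by fun_prop) ?_
  exact (ae_restrict_iff' measurableSet_Ioc).2 (.of_forall fun s hs => norm_cexp_mul_le hs z)

lemma hasDerivAt_laplaceIoc (z : ℂ) :
    HasDerivAt (laplaceIoc g) (∫ s in Ioc (-1:ℝ) 0, s * cexp (z * s) * g s) z := by
  refine (hasDerivAt_integral_of_dominated_loc_of_deriv_le (ball_mem_nhds z one_pos)
    (.of_forall fun w => (integrableOn_cexp_mul hg w).aestronglyMeasurable)
    (integrableOn_cexp_mul hg z) (F' := fun w s => s * cexp (w * s) * g s)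
    ((Continuous.aestronglyMeasurable (by fun_prop)).mul hg.1)
    (bound := fun s => Real.exp (|z.re| + 1) * ‖g s‖)
    ?_ (hg.norm.const_mul _) ?_).2
  · refine (ae_restrict_iff' measurableSet_Ioc).2 (.of_forall fun s hs w hw => ?_)
    have hre : |w.re| ≤ |z.re| + 1 := by
      have := (abs_re_le_norm (w - z)).trans (mem_ball_iff_norm.1 hw).le
      rw [sub_re] at this
      linarith [abs_sub_abs_le_abs_sub w.re z.re]
    have hs1 : ‖(s : ℂ)‖ ≤ 1 := by simpa using abs_le_one_of_mem_Ioc hs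
    calc ‖(s : ℂ) * cexp (w * s) * g s‖
        = ‖(s : ℂ)‖ * ‖cexp (w * s)‖ * ‖g s‖ := by rw [norm_mul, norm_mul]
      _ ≤ 1 * Real.exp (|z.re| + 1) * ‖g s‖ := by
          gcongr
          exact (norm_cexp_mul_le hs w).trans (Real.exp_le_exp.2 hre)
      _ = Real.exp (|z.re| + 1) * ‖g s‖ := by rw [one_mul]
  · refine .of_forall fun s w _ => ?_
    simpa [mul_comm, mul_assoc] using ((hasDerivAt_mul_const (s : ℂ)).cexp).mul_const (g s)

lemma differentiable_laplaceIoc : Differentiable ℂ (laplaceIoc g) :=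
  fun z => (hasDerivAt_laplaceIoc hg z).differentiableAt

lemma norm_laplaceIoc_sub_le {z w : ℂ} (h : ‖z - w‖ ≤ 1) :
    ‖laplaceIoc g z - laplaceIoc g w‖
      ≤ 2 * Real.exp |w.re| * ‖z - w‖ * ∫ s in Ioc (-1:ℝ) 0, ‖g s‖ := by
  rw [laplaceIoc, laplaceIoc, ← integral_sub (integrableOn_cexp_mul hg z)
    (integrableOn_cexp_mul hg w), ← integral_const_mul]
  refine (norm_integral_le_integral_norm _).trans (setIntegral_mono_on
    ((integrableOn_cexp_mul hg z).sub (integrableOn_cexp_mul hg w)).norm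
    (hg.norm.const_mul _) measurableSet_Ioc fun s hs => ?_)
  have hs1 : ‖(s : ℂ)‖ ≤ 1 := by simpa using abs_le_one_of_mem_Ioc hs
  have hsmall : ‖(z - w) * s‖ ≤ ‖z - w‖ := by
    simpa [norm_mul] using mul_le_mul_of_nonneg_left hs1 (norm_nonneg (z - w))
  have hfactor : cexp (z * s) * g s - cexp (w * s) * g s
      = cexp (w * s) * (cexp ((z - w) * s) - 1) * g s := by
    rw [mul_sub, ← exp_add]; ring_nf
  calc ‖cexp (z * s) * g s - cexp (w * s) * g s‖
      = ‖cexp (w * s)‖ * ‖cexp ((z - w) * s) - 1‖ * ‖g s‖ := by rw [hfactor, norm_mul, norm_mul]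
    _ ≤ Real.exp |w.re| * (2 * ‖z - w‖) * ‖g s‖ := by
        gcongr
        · exact norm_cexp_mul_le hs w
        · exact (norm_exp_sub_one_le (hsmall.trans h)).trans (by gcongr)
    _ = 2 * Real.exp |w.re| * ‖z - w‖ * ‖g s‖ := by ring
end

def vertInfty (c : ℝ) : Filter ℂ := comap re (𝓝 c) ⊓ comap im (cocompact ℝ)

lemma tendsto_re_vertInfty (c : ℝ) : Tendsto re (vertInfty c) (𝓝 c) :=
  tendsto_comap.mono_left inf_le_left

lemma tendsto_im_vertInfty (c : ℝ) : Tendsto im (vertInfty c) (cocompact ℝ) :=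
  tendsto_comap.mono_left inf_le_right

lemma vertInfty_le_cobounded (c : ℝ) : vertInfty c ≤ Bornology.cobounded ℂ := by
  rw [← tendsto_id', ← tendsto_norm_atTop_iff_cobounded]
  exact tendsto_atTop_mono (fun z => abs_im_le_norm z)
    (tendsto_norm_cocompact_atTop.comp (tendsto_im_vertInfty c))

lemma tendsto_inv_vertInfty (c : ℝ) : Tendsto (·⁻¹) (vertInfty c) (𝓝 (0 : ℂ)) :=
  tendsto_inv₀_cobounded.mono_left (vertInfty_le_cobounded c)

lemma tendsto_laplaceIoc_vertInfty {g : ℝ → ℂ} (hg : IntegrableOn g (Ioc (-1:ℝ) 0)) (c : ℝ) :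
    Tendsto (laplaceIoc g) (vertInfty c) (𝓝 0) := by
  have hline : Tendsto (fun t : ℝ => laplaceIoc g (c + t * I)) (cocompact ℝ) (𝓝 0) := by
    convert tendsto_integral_cexp_mul_I_cocompact
      ((Ioc (-1:ℝ) 0).indicator fun s => cexp (c * s) * g s) using 2 with t
    rw [laplaceIoc, ← integral_indicator measurableSet_Ioc]
    congr 1 with s
    by_cases hs : s ∈ Ioc (-1:ℝ) 0
    · simp only [indicator_of_mem hs, ← mul_assoc, ← exp_add]
      ring_nf
    · simp [indicator_of_notMem hs]
  have hsub : ∀ z : ℂ, z - (c + z.im * I) = ((z.re - c : ℝ) : ℂ) := fun z => by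
    apply Complex.ext <;> simp
  have hdiff : ∀ᶠ z in vertInfty c, ‖laplaceIoc g z - laplaceIoc g (c + z.im * I)‖
      ≤ 2 * Real.exp |c| * |z.re - c| * ∫ s in Ioc (-1:ℝ) 0, ‖g s‖ := by
    filter_upwards [(tendsto_re_vertInfty c).eventually (Metric.closedBall_mem_nhds c one_pos)]
      with z hz
    have h := norm_laplaceIoc_sub_le hg (z := z) (w := c + z.im * I)
    simp only [hsub, norm_real, Real.norm_eq_abs, add_re, ofReal_re, mul_re, ofReal_im, I_re,
      I_im, mul_zero, mul_one, sub_self, add_zero] at h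
    exact h (by simpa [Real.dist_eq] using hz)
  have hbound : Tendsto (fun z : ℂ => 2 * Real.exp |c| * |z.re - c| * ∫ s in Ioc (-1:ℝ) 0, ‖g s‖)
      (vertInfty c) (𝓝 0) := by
    simpa using (((tendsto_re_vertInfty c).sub_const c).abs.const_mul _).mul_const _
  simpa using (hline.comp (tendsto_im_vertInfty c)).add (squeeze_zero_norm' hdiff hbound)

lemma tendsto_add_nat_mul_two_pi_I_vertInfty (z : ℂ) :
    Tendsto (fun p : ℕ × ℂ => p.2 + p.1 * (2 * π * I)) (atTop ×ˢ 𝓝 z) (vertInfty z.re) := by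
  refine tendsto_inf.2 ⟨tendsto_comap_iff.2 ?_, tendsto_comap_iff.2 ?_⟩
  · simpa [Function.comp_def] using (continuous_re.tendsto z).comp tendsto_snd
  · refine Tendsto.mono_right ?_ atTop_le_cocompact
    simpa [Function.comp_def] using ((continuous_im.tendsto z).comp tendsto_snd).add_atTop
      ((tendsto_natCast_atTop_atTop.comp tendsto_fst).atTop_mul_const (by positivity : 0 < 2 * π))

lemma eventually_comap_re_of_vertInfty {p : ℂ → Prop} {c : ℝ} (hp : IsOpen {z | p z})
    (hline : ∀ y : ℝ, p (c + y * I)) (h : ∀ᶠ z in vertInfty c, p z) :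
    ∀ᶠ z in comap re (𝓝 c), p z := by
  obtain ⟨U, hU, V, hV, hUV⟩ := Filter.eventually_inf.1 h
  obtain ⟨S, hS, hSU⟩ := mem_comap.1 hU
  obtain ⟨T, hT, hTV⟩ := mem_comap.1 hV
  obtain ⟨K, hK, hKT⟩ := mem_cocompact.1 hT
  have hnear : ∀ᶠ x : ℝ in 𝓝 c, ∀ y ∈ K, p (x + y * I) :=
    hK.eventually_forall_of_forall_eventually fun y _ =>
      (show Continuous fun q : ℝ × ℝ => (q.1 + q.2 * I : ℂ) by fun_prop).continuousAt (x := (c, y))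
        |>.preimage_mem_nhds (hp.mem_nhds (hline y))
  rw [eventually_comap]
  filter_upwards [hnear, hS] with x hxK hxS z rfl
  by_cases hz : z.im ∈ K
  · simpa [re_add_im] using hxK _ hz
  · exact hUV z ⟨hSU hxS, hTV (hKT hz)⟩

lemma exists_mem_ball_eq_zero_of_norm_lt {f : ℂ → ℂ} {z₀ : ℂ} {r m : ℝ} (hr : 0 < r)
    (hf : ∀ z ∈ closedBall z₀ r, DifferentiableAt ℂ f z)
    (hsphere : ∀ z ∈ sphere z₀ r, m ≤ ‖f z‖) (hcenter : ‖f z₀‖ < m) :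
    ∃ z ∈ ball z₀ r, f z = 0 := by
  by_contra! hne
  have hm : 0 < m := (norm_nonneg _).trans_lt hcenter
  have hne' : ∀ z ∈ closedBall z₀ r, f z ≠ 0 := fun z hz =>
    (mem_closedBall.1 hz).lt_or_eq.elim (fun h => hne z (mem_ball.2 h)) fun h =>
      norm_pos_iff.1 (hm.trans_le (hsphere z (mem_sphere.2 h)))
  have hinv : DiffContOnCl ℂ (fun z => (f z)⁻¹) (ball z₀ r) := by
    apply DifferentiableOn.diffContOnCl
    rw [closure_ball z₀ hr.ne']
    exact fun z hz => ((hf z hz).inv (hne' z hz)).differentiableWithinAt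
  have hmax : ‖(f z₀)⁻¹‖ ≤ m⁻¹ := by
    refine Complex.norm_le_of_forall_mem_frontier_norm_le isBounded_ball hinv (fun z hz => ?_)
      (subset_closure (mem_ball_self hr))
    rw [frontier_ball z₀ hr.ne'] at hz
    rw [norm_inv]
    exact inv_anti₀ hm (hsphere z hz)
  rw [norm_inv] at hmax
  have hpos : 0 < ‖f z₀‖ := norm_pos_iff.2 (hne' z₀ (mem_closedBall_self hr.le))
  exact ((inv_lt_inv₀ hm hpos).2 hcenter).not_ge hmax

lemma exists_sphere_forall_le_norm {f : ℂ → ℂ} (hf : Continuous f) {z₀ : ℂ}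
    (hne : ∀ᶠ z in 𝓝[≠] z₀, f z ≠ 0) {ε : ℝ} (hε : 0 < ε) :
    ∃ r, 0 < r ∧ r < ε ∧ ∃ m, 0 < m ∧ ∀ z ∈ sphere z₀ r, m ≤ ‖f z‖ := by
  obtain ⟨δ, hδ, hball⟩ := Metric.eventually_nhds_iff.1 (eventually_nhdsWithin_iff.1 hne)
  set r := min (δ / 2) (ε / 2)
  have hr : 0 < r := lt_min (half_pos hδ) (half_pos hε)
  have hsphere : ∀ z ∈ sphere z₀ r, 0 < ‖f z‖ := fun z hz => by
    rw [mem_sphere] at hz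
    refine norm_pos_iff.2 (hball (hz.trans_lt ((min_le_left _ _).trans_lt (half_lt_self hδ))) ?_)
    rintro rfl
    exact hr.ne (by simpa using hz)
  obtain ⟨m, hm, hmin⟩ := (isCompact_sphere z₀ r).exists_forall_le' hf.norm.continuousOn hsphere
  exact ⟨r, hr, (min_le_right _ _).trans_lt (half_lt_self hε), m, hm, hmin⟩

section
variable {ι : Type*} [Fintype ι] [DecidableEq ι]

lemma differentiableAt_det {M : ℂ → Matrix ι ι ℂ} {z : ℂ}
    (h : ∀ i j, DifferentiableAt ℂ (fun w => M w i j) z) :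
    DifferentiableAt ℂ (fun w => (M w).det) z := by
  simp only [Matrix.det_apply]
  fun_prop

lemma det_one_sub_smul_eq_zero_iff (A : Matrix ι ι ℂ) (w : ℂ) :
    (1 - w • A).det = 0 ↔ ∃ μ ∈ spectrum ℂ A, w * μ = 1 := by
  rcases eq_or_ne w 0 with rfl | hw
  · simp
  have hfactor : 1 - w • A = w • (algebraMap ℂ _ w⁻¹ - A) := by
    rw [Algebra.algebraMap_eq_smul_one, smul_sub, smul_smul, mul_inv_cancel₀ hw, one_smul]
  rw [hfactor, Matrix.det_smul, mul_eq_zero, or_iff_right (pow_ne_zero _ hw)]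
  constructor
  · intro h
    refine ⟨w⁻¹, ?_, mul_inv_cancel₀ hw⟩
    rwa [spectrum.mem_iff, Matrix.isUnit_iff_isUnit_det, isUnit_iff_ne_zero, not_not]
  · rintro ⟨μ, hμ, hwμ⟩
    rw [← eq_inv_of_mul_eq_one_right hwμ]
    by_contra h
    exact spectrum.mem_iff.1 hμ ((Matrix.isUnit_iff_isUnit_det _).2 (isUnit_iff_ne_zero.2 h))

lemma exists_one_lt_forall_det_one_sub_smul_ne_zero {A : Matrix ι ι ℂ}
    (hA : ∀ μ ∈ spectrum ℂ A, ‖μ‖ < 1) :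
    ∃ r, 1 < r ∧ ∀ w : ℂ, ‖w‖ ≤ r → (1 - w • A).det ≠ 0 := by
  have hnear : ∀ᶠ r in 𝓝 (1:ℝ), ∀ μ ∈ spectrum ℂ A, r * ‖μ‖ < 1 :=
    (A.finite_spectrum.eventually_all).2 fun μ hμ =>
      (continuous_id.mul continuous_const).continuousAt.eventually_lt continuousAt_const
        (by simpa using hA μ hμ)
  obtain ⟨r, hr, hr1⟩ := ((hnear.filter_mono (nhdsWithin_le_nhds (s := Ioi 1))).and
    self_mem_nhdsWithin).exists
  refine ⟨r, hr1, fun w hw hdet => ?_⟩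
  obtain ⟨μ, hμ, hwμ⟩ := (det_one_sub_smul_eq_zero_iff A w).1 hdet
  have hle : ‖w * μ‖ ≤ r * ‖μ‖ := by rw [norm_mul]; gcongr
  rw [hwμ, norm_one] at hle
  linarith [hr μ hμ]

lemma eventually_forall_det_one_sub_smul_sub_ne_zero {A : Matrix ι ι ℂ} {K : Set ℂ}
    (hK : IsCompact K) (h : ∀ w ∈ K, (1 - w • A).det ≠ 0) :
    ∀ᶠ E in 𝓝 (0 : Matrix ι ι ℂ), ∀ w ∈ K, (1 - w • A - E).det ≠ 0 :=
  hK.eventually_forall_of_forall_eventually fun w hw =>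
    (by fun_prop : Continuous fun p : Matrix ι ι ℂ × ℂ => (1 - p.2 • A - p.1).det).continuousAt
      |>.eventually_ne (by simpa using h w hw)

lemma eventually_det_one_sub_cexp_smul_ne_zero (A : Matrix ι ι ℂ) (z₀ : ℂ) :
    ∀ᶠ z in 𝓝[≠] z₀, (1 - cexp (-z) • A).det ≠ 0 := by
  have hdiff : Differentiable ℂ fun z => (1 - cexp (-z) • A).det := fun z =>
    differentiableAt_det fun i j => by
      simp only [Matrix.sub_apply, Matrix.smul_apply, smul_eq_mul]
      fun_prop
  refine (hdiff.analyticAt z₀).eventually_eq_zero_or_eventually_ne_zero.resolve_left fun h => ?_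
  obtain ⟨w, hw⟩ := ((A.finite_spectrum.image Inv.inv).insert 0).exists_notMem
  rw [mem_insert_iff, not_or] at hw
  have hzero := AnalyticOnNhd.eqOn_zero_of_preconnected_of_eventuallyEq_zero
    (fun z _ => hdiff.analyticAt z) isPreconnected_univ (mem_univ z₀) h (mem_univ (-log w))
  simp only [Pi.zero_apply, neg_neg, exp_log hw.1] at hzero
  obtain ⟨μ, hμ, hwμ⟩ := (det_one_sub_smul_eq_zero_iff A w).1 hzero
  exact hw.2 ⟨μ, hμ, (eq_inv_of_mul_eq_one_left hwμ).symm⟩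
end

section
variable {ι κ : Type*}

noncomputable def laplaceIocMatrix (B : ℝ → Matrix ι κ ℂ) (z : ℂ) : Matrix ι κ ℂ :=
  Matrix.of fun i j => laplaceIoc (fun s => B s i j) z

noncomputable def charRemainder (A2 A3 : ℝ → Matrix ι κ ℂ) (z : ℂ) : Matrix ι κ ℂ :=
  laplaceIocMatrix A2 z + z⁻¹ • laplaceIocMatrix A3 z

lemma tendsto_charRemainder_vertInfty {A2 A3 : ℝ → Matrix ι κ ℂ}
    (hA2 : ∀ i j, IntegrableOn (fun s => A2 s i j) (Ioc (-1:ℝ) 0))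
    (hA3 : ∀ i j, IntegrableOn (fun s => A3 s i j) (Ioc (-1:ℝ) 0)) (c : ℝ) :
    Tendsto (charRemainder A2 A3) (vertInfty c) (𝓝 0) :=
  tendsto_pi_nhds.2 fun i => tendsto_pi_nhds.2 fun j => by
    simpa [charRemainder, laplaceIocMatrix] using (tendsto_laplaceIoc_vertInfty (hA2 i j) c).add
      ((tendsto_inv_vertInfty c).mul (tendsto_laplaceIoc_vertInfty (hA3 i j) c))
end

section
variable {ι : Type*} [Fintype ι] [DecidableEq ι] {A2 A3 : ℝ → Matrix ι ι ℂ}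
  (hA2 : ∀ i j, IntegrableOn (fun s => A2 s i j) (Ioc (-1:ℝ) 0))
  (hA3 : ∀ i j, IntegrableOn (fun s => A3 s i j) (Ioc (-1:ℝ) 0))
include hA2 hA3

lemma differentiableAt_det_sub_charRemainder (A : Matrix ι ι ℂ) {c z : ℂ} (hz : z + c ≠ 0) :
    DifferentiableAt ℂ (fun w => (1 - cexp (-w) • A - charRemainder A2 A3 (w + c)).det) z :=
  differentiableAt_det fun i j => by
    have h2 := differentiable_laplaceIoc (hA2 i j)
    have h3 := differentiable_laplaceIoc (hA3 i j)
    simp only [charRemainder, laplaceIocMatrix, Matrix.sub_apply, Matrix.add_apply,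
      Matrix.smul_apply, Matrix.of_apply, smul_eq_mul]
    fun_prop (disch := exact hz)

lemma tendsto_det_sub_charRemainder_shift (A : Matrix ι ι ℂ) (z : ℂ) :
    Tendsto (fun p : ℕ × ℂ => (1 - cexp (-p.2) • A
        - charRemainder A2 A3 (p.2 + p.1 * (2 * π * I))).det - (1 - cexp (-p.2) • A).det)
      (atTop ×ˢ 𝓝 z) (𝓝 0) := by
  have hcont : Continuous fun q : ℂ × Matrix ι ι ℂ => (1 - cexp (-q.1) • A - q.2).det := by
    fun_prop
  have hR := (tendsto_charRemainder_vertInfty hA2 hA3 z.re).comp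
    (tendsto_add_nat_mul_two_pi_I_vertInfty z)
  have h1 := (hcont.tendsto (z, 0)).comp (tendsto_snd.prodMk_nhds hR)
  have h2 : Tendsto (fun p : ℕ × ℂ => (1 - cexp (-p.2) • A).det) (atTop ×ˢ 𝓝 z)
      (𝓝 (1 - cexp (-z) • A).det) :=
    ((show Continuous fun w : ℂ => (1 - cexp (-w) • A).det by fun_prop).tendsto z).comp tendsto_snd
  simpa using h1.sub h2
end

section
variable {n : ℕ} {Am1 : Matrix (Fin n) (Fin n) ℂ} {A2 A3 : ℝ → Matrix (Fin n) (Fin n) ℂ}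
  (hA2 : ∀ i j, IntegrableOn (fun s => A2 s i j) (Ioc (-1:ℝ) 0))
  (hA3 : ∀ i j, IntegrableOn (fun s => A3 s i j) (Ioc (-1:ℝ) 0))

lemma Delta_eq_neg_smul {z : ℂ} (hz : z ≠ 0) :
    Delta Am1 A2 A3 z = (-z) • (1 - cexp (-z) • Am1 - charRemainder A2 A3 z) := by
  ext i j
  simp only [Delta, charRemainder, laplaceIocMatrix, laplaceIoc, Matrix.add_apply,
    Matrix.sub_apply, Matrix.smul_apply, Matrix.of_apply, smul_eq_mul]
  field_simp
  ring

lemma det_Delta_eq_zero_iff {z : ℂ} (hz : z ≠ 0) :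
    (Delta Am1 A2 A3 z).det = 0 ↔ (1 - cexp (-z) • Am1 - charRemainder A2 A3 z).det = 0 := by
  rw [Delta_eq_neg_smul hz, Matrix.det_smul]
  simp [hz]

include hA2 hA3

lemma continuous_Delta : Continuous (Delta Am1 A2 A3) := by
  have h2 : Continuous (laplaceIocMatrix A2) :=
    continuous_matrix fun i j => (differentiable_laplaceIoc (hA2 i j)).continuous
  have h3 : Continuous (laplaceIocMatrix A3) :=
    continuous_matrix fun i j => (differentiable_laplaceIoc (hA3 i j)).continuous
  change Continuous fun z => (-z) • (1 : Matrix (Fin n) (Fin n) ℂ) + (z * cexp (-z)) • Am1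
    + z • laplaceIocMatrix A2 z + laplaceIocMatrix A3 z
  fun_prop

lemma eventually_det_Delta_ne_zero_vertInfty (hAm1 : ∀ μ ∈ spectrum ℂ Am1, ‖μ‖ < 1) :
    ∀ᶠ z in vertInfty 0, (Delta Am1 A2 A3 z).det ≠ 0 := by
  obtain ⟨r, hr1, hr⟩ := exists_one_lt_forall_det_one_sub_smul_ne_zero hAm1
  have hE := eventually_forall_det_one_sub_smul_sub_ne_zero (isCompact_closedBall (0:ℂ) r)
    fun w hw => hr w (mem_closedBall_zero_iff.1 hw)
  have hexp : Tendsto (fun z : ℂ => ‖cexp (-z)‖) (vertInfty 0) (𝓝 1) := by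
    simpa [norm_exp] using ((tendsto_re_vertInfty 0).neg).rexp
  filter_upwards [hexp.eventually (ge_mem_nhds hr1),
    (tendsto_charRemainder_vertInfty hA2 hA3 0).eventually hE,
    vertInfty_le_cobounded 0 (Bornology.eventually_ne_cobounded 0)] with z hz hEz hz0
  rw [Ne, det_Delta_eq_zero_iff hz0]
  exact hEz _ (mem_closedBall_zero_iff.2 hz)

theorem exists_pos_forall_det_Delta_eq_zero_re_le
    (hre : ∀ z, (Delta Am1 A2 A3 z).det = 0 → z.re < 0)
    (hAm1 : ∀ μ ∈ spectrum ℂ Am1, ‖μ‖ < 1) :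
    ∃ α : ℝ, 0 < α ∧ ∀ z, (Delta Am1 A2 A3 z).det = 0 → z.re ≤ -α := by
  have hline : ∀ y : ℝ, (Delta Am1 A2 A3 ((0:ℝ) + y * I)).det ≠ 0 := fun y h => by
    simpa using hre _ h
  have hnear := eventually_comap_re_of_vertInfty
    (isOpen_ne_fun (continuous_Delta hA2 hA3).matrix_det continuous_const) hline
    (eventually_det_Delta_ne_zero_vertInfty hA2 hA3 hAm1)
  obtain ⟨ε, hε, hball⟩ := Metric.eventually_nhds_iff.1 (eventually_comap.1 hnear)
  refine ⟨ε / 2, half_pos hε, fun z hz => ?_⟩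
  by_contra! hlt
  refine hball (y := z.re) ?_ z rfl hz
  rw [Real.dist_eq, sub_zero, abs_lt]
  constructor <;> linarith [hre z hz]

lemma exists_det_Delta_eq_zero_re_gt {z₀ : ℂ} {r m : ℝ} (hr : 0 < r) (hm : 0 < m)
    (hz₀ : (1 - cexp (-z₀) • Am1).det = 0)
    (hsphere : ∀ z ∈ sphere z₀ r, m ≤ ‖(1 - cexp (-z) • Am1).det‖) :
    ∃ z, (Delta Am1 A2 A3 z).det = 0 ∧ z₀.re - r < z.re := by
  -- `F k z = det Δ(z + 2πik) / (-(z + 2πik))ⁿ` by `Delta_eq_neg_smul` and periodicity of `exp`.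
  set F : ℕ → ℂ → ℂ := fun k z =>
    (1 - cexp (-z) • Am1 - charRemainder A2 A3 (z + k * (2 * π * I))).det
  have hnear : ∀ᶠ q in atTop ×ˢ 𝓝ˢ (closedBall z₀ r),
      ‖F q.1 q.2 - (1 - cexp (-q.2) • Am1).det‖ < m / 2 ∧ q.2 + q.1 * (2 * π * I) ≠ 0 :=
    (isCompact_closedBall z₀ r).mem_prod_nhdsSet_of_forall fun z _ =>
      ((tendsto_det_sub_charRemainder_shift hA2 hA3 Am1 z).norm.eventually
        (gt_mem_nhds (by simpa using half_pos hm))).and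
      ((tendsto_add_nat_mul_two_pi_I_vertInfty z).eventually
        (vertInfty_le_cobounded _ (Bornology.eventually_ne_cobounded 0)))
  obtain ⟨k, hk⟩ :=
    (eventually_prod_principal_iff.1 (Filter.prod_mono le_rfl principal_le_nhdsSet hnear)).exists
  have hperiod : ∀ z : ℂ, cexp (-(z + k * (2 * π * I))) = cexp (-z) := fun z => by
    rw [neg_add, exp_add, exp_neg (k * _), exp_nat_mul_two_pi_mul_I, inv_one, mul_one]
  have hsphere' : ∀ z ∈ sphere z₀ r, m / 2 ≤ ‖F k z‖ := fun z hz => by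
    have hclose := (hk z (sphere_subset_closedBall hz)).1
    have htriangle := norm_sub_norm_le (1 - cexp (-z) • Am1).det (F k z)
    rw [norm_sub_rev] at htriangle
    linarith [hsphere z hz]
  obtain ⟨z, hz, hFz⟩ := exists_mem_ball_eq_zero_of_norm_lt hr
    (fun z hz => differentiableAt_det_sub_charRemainder hA2 hA3 Am1 (hk z hz).2) hsphere'
    (by simpa [hz₀] using (hk z₀ (mem_closedBall_self hr.le)).1)
  refine ⟨z + k * (2 * π * I), ?_, ?_⟩
  · rw [det_Delta_eq_zero_iff (hk z (ball_subset_closedBall hz)).2, hperiod]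
    exact hFz
  · have hre : |z.re - z₀.re| < r := by
      simpa using (abs_re_le_norm (z - z₀)).trans_lt (mem_ball_iff_norm.1 hz)
    rw [show (z + k * (2 * π * I)).re = z.re by simp]
    linarith [(abs_lt.1 hre).1]

theorem norm_lt_one_of_mem_spectrum_of_forall_re_le {α : ℝ} (hα : 0 < α)
    (h : ∀ z, (Delta Am1 A2 A3 z).det = 0 → z.re ≤ -α) :
    ∀ μ ∈ spectrum ℂ Am1, ‖μ‖ < 1 := by
  intro μ hμ
  by_contra! hμ1
  have hμ0 : μ ≠ 0 := norm_pos_iff.1 (one_pos.trans_le hμ1)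
  have hlog : (1 - cexp (-log μ) • Am1).det = 0 :=
    (det_one_sub_smul_eq_zero_iff Am1 _).2
      ⟨μ, hμ, by rw [exp_neg, exp_log hμ0, inv_mul_cancel₀ hμ0]⟩
  obtain ⟨r, hr, hrα, m, hm, hsphere⟩ := exists_sphere_forall_le_norm (by fun_prop)
    (eventually_det_one_sub_cexp_smul_ne_zero Am1 (log μ)) hα
  obtain ⟨z, hz, hre⟩ := exists_det_Delta_eq_zero_re_gt hA2 hA3 hr hm hlog hsphere
  have : 0 ≤ (log μ).re := by
    rw [log_re]
    exact Real.log_nonneg hμ1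
  linarith [h z hz]
end

theorem exponential_stability_iff_general
    (n : ℕ) (Am1 : Matrix (Fin n) (Fin n) ℂ)
    (A2 A3 : ℝ → Matrix (Fin n) (Fin n) ℂ)
    (hA2 : ∀ i j, MeasureTheory.MemLp (fun θ => A2 θ i j) 2
      (volume.restrict (Set.Ioc (-1:ℝ) 0)))
    (hA3 : ∀ i j, MeasureTheory.MemLp (fun θ => A3 θ i j) 2
      (volume.restrict (Set.Ioc (-1:ℝ) 0))) :
    (∃ α : ℝ, 0 < α ∧ ∀ lam : ℂ, (Delta Am1 A2 A3 lam).det = 0 → lam.re ≤ -α) ↔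
      ((∀ lam : ℂ, (Delta Am1 A2 A3 lam).det = 0 → lam.re < 0) ∧
        (∀ μ ∈ spectrum ℂ Am1, ‖μ‖ < 1)) := by
  have hI2 : ∀ i j, IntegrableOn (fun s => A2 s i j) (Ioc (-1:ℝ) 0) :=
    fun i j => (hA2 i j).integrable one_le_two
  have hI3 : ∀ i j, IntegrableOn (fun s => A3 s i j) (Ioc (-1:ℝ) 0) :=
    fun i j => (hA3 i j).integrable one_le_two
  constructor
  · rintro ⟨α, hα, h⟩
    exact ⟨fun z hz => (h z hz).trans_lt (neg_neg_of_pos hα),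
      norm_lt_one_of_mem_spectrum_of_forall_re_le hI2 hI3 hα h⟩
  · rintro ⟨hre, hAm1⟩
    exact exists_pos_forall_det_Delta_eq_zero_re_le hI2 hI3 hre hAm1

theorem exponential_stability_iff
    (n : ℕ) (hn : 0 < n) (Am1 : Matrix (Fin n) (Fin n) ℂ)
    (A2 A3 : ℝ → Matrix (Fin n) (Fin n) ℂ)
    (hA2 : ∀ i j, MeasureTheory.MemLp (fun θ => A2 θ i j) 2
      (volume.restrict (Set.Ioc (-1:ℝ) 0)))
    (hA3 : ∀ i j, MeasureTheory.MemLp (fun θ => A3 θ i j) 2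
      (volume.restrict (Set.Ioc (-1:ℝ) 0))) :
    (∃ α : ℝ, 0 < α ∧ ∀ lam : ℂ, (Delta Am1 A2 A3 lam).det = 0 → lam.re ≤ -α) ↔
      ((∀ lam : ℂ, (Delta Am1 A2 A3 lam).det = 0 → lam.re < 0) ∧
        (∀ μ ∈ spectrum ℂ Am1, ‖μ‖ < 1)) :=
  exponential_stability_iff_general n Am1 A2 A3 hA2 hA3
end

section
/- Every complex root of the equation λe^λ + λ + e^λ = 0 has negative real part: for all λ ∈ ℂ, if λ·exp(λ) + λ + exp(λ) = 0 then Re λ < 0. -/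
/-!
Rewrite the equation as `e^λ (λ + 1) = -λ`. In the closed right half-plane `λ` is strictly
closer to `0` than to `-1`, so `|e^λ| = |λ| / |λ + 1| < 1`, which forces `Re λ < 0`.
-/

theorem Complex.norm_lt_norm_add_one_of_nonneg_re {z : ℂ} (hz : 0 ≤ z.re) : ‖z‖ < ‖z + 1‖ := by
  have hsq : ‖z‖ ^ 2 < ‖z + 1‖ ^ 2 := by
    simp only [Complex.sq_norm, Complex.normSq_apply, Complex.add_re, Complex.add_im,
      Complex.one_re, Complex.one_im, add_zero]
    nlinarith
  exact lt_of_pow_lt_pow_left₀ 2 (norm_nonneg _) hsq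

theorem roots_of_quasipolynomial_in_left_half_plane (lam : ℂ)
    (h : lam * Complex.exp lam + lam + Complex.exp lam = 0) : lam.re < 0 := by
  by_contra! hre
  have hexp : 1 ≤ ‖Complex.exp lam‖ := by
    rw [Complex.norm_exp]
    exact Real.one_le_exp hre
  have hnorm : ‖lam‖ = ‖Complex.exp lam‖ * ‖lam + 1‖ := by
    rw [← norm_mul, ← norm_neg lam]
    congr 1
    linear_combination -h
  have hlt : ‖lam + 1‖ < ‖lam + 1‖ := calc
    ‖lam + 1‖ ≤ ‖Complex.exp lam‖ * ‖lam + 1‖ := le_mul_of_one_le_left (norm_nonneg _) hexp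
    _ = ‖lam‖ := hnorm.symm
    _ < ‖lam + 1‖ := Complex.norm_lt_norm_add_one_of_nonneg_re hre
  exact lt_irrefl _ hlt
end

section
/- Fix r with 0 < r < π. For a ∈ ℂ let f_a(λ) = a − λ + λe^{−λ}. Then there exists N ∈ ℕ such that for every integer k with |k| ≥ N and every a ∈ ℂ taken from a fixed pair {α, β}: f_a has exactly one zero λ_k(a) (counted with multiplicity, i.e., it is a simple zero) in the closed disc of radius r centered at 2πik; moreover λ_k(α) − λ_k(β) → 0 as |k| → ∞. -/
/-!
Write `λ = 2πik + z`. Since `exp (-2πik) = 1`, the equation `f_a(λ) = 0` reads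
`exp (-z) = 1 - a / λ`, and as long as `‖z‖ ≤ r < π` the principal logarithm turns it into the
fixed-point equation `z = -log (1 - a / (2πik + z))`. For large `|k|` the quotient `a / λ` is
small on the disc `‖z‖ ≤ r`, so the right-hand side is a contraction of that disc into the
smaller disc of radius `O(‖a‖ / |k|)`. Banach's fixed-point theorem gives exactly one zero
`λ_k(a)` in the disc, with `λ_k(a) - 2πik → 0`, and it is simple because
`f_a'(λ) = a - λ - a / λ` there. Both chains approach `2πik`, hence each other.
-/

open Filter Topology Metric

open Complex in
lemma lipschitzOnWith_log_one_sub :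
    LipschitzOnWith 2 (fun w : ℂ => log (1 - w)) (closedBall 0 (1 / 2)) := by
  refine (convex_closedBall (0 : ℂ) (1 / 2)).lipschitzOnWith_of_nnnorm_hasDerivWithin_le
    (f' := fun w => -(1 - w)⁻¹) (fun w hw => ?_) (fun w hw => ?_)
  · rw [mem_closedBall_zero_iff] at hw
    have hslit : 1 - w ∈ slitPlane := by
      refine mem_slitPlane_iff.2 (Or.inl ?_)
      have := (re_le_norm w).trans hw
      simp only [sub_re, one_re]
      linarith
    have := (hasDerivAt_log hslit).comp w ((hasDerivAt_id w).const_sub 1)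
    simpa [Function.comp_def] using this.hasDerivWithinAt
  · rw [mem_closedBall_zero_iff] at hw
    have h : (1 : ℝ) / 2 ≤ ‖1 - w‖ := by
      have := norm_sub_norm_le (1 : ℂ) w
      rw [norm_one] at this
      linarith
    rw [← NNReal.coe_le_coe, coe_nnnorm, norm_neg, norm_inv, NNReal.coe_ofNat,
      inv_le_comm₀ (by linarith) two_pos]
    linarith

lemma norm_div_le_of_le_norm {a w : ℂ} {B : ℝ} (hB : 0 < B) (hw : B ≤ ‖w‖) :
    ‖a / w‖ ≤ ‖a‖ / B := by
  rw [norm_div]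
  exact div_le_div_of_nonneg_left (norm_nonneg a) hB hw

lemma exists_nat_forall_le_abs_of_eventually_cofinite {p : ℤ → Prop}
    (h : ∀ᶠ k in cofinite, p k) : ∃ N : ℕ, ∀ k : ℤ, (N : ℤ) ≤ |k| → p k := by
  rw [Int.cofinite_eq, eventually_sup, eventually_atBot, eventually_atTop] at h
  obtain ⟨⟨N₁, hN₁⟩, ⟨N₂, hN₂⟩⟩ := h
  refine ⟨max (-N₁).toNat N₂.toNat, fun k hk => ?_⟩
  rcases le_abs'.1 hk with hk | hk
  · exact hN₁ k (by omega)
  · exact hN₂ k (by omega)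

noncomputable def charFactor (a lam : ℂ) : ℂ := a - lam + lam * Complex.exp (-lam)

def IsUniqueSimpleZeroOn (f : ℂ → ℂ) (s : Set ℂ) (ρ : ℂ) : Prop :=
  ρ ∈ s ∧ f ρ = 0 ∧ deriv f ρ ≠ 0 ∧ ∀ w ∈ s, f w = 0 → w = ρ

namespace charFactor

open Complex

variable {a lam : ℂ} {B : ℝ}

lemma hasDerivAt (a lam : ℂ) :
    HasDerivAt (charFactor a) (-1 + (1 - lam) * exp (-lam)) lam := by
  refine (((hasDerivAt_id lam).const_sub a).add
    ((hasDerivAt_id lam).mul (hasDerivAt_neg lam).cexp)).congr_deriv ?_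
  simp only [id]
  ring

lemma eq_zero_iff (hlam : lam ≠ 0) : charFactor a lam = 0 ↔ exp (-lam) = 1 - a / lam := by
  have h : exp (-lam) - (1 - a / lam) = charFactor a lam / lam := by
    rw [charFactor]
    field_simp
    ring
  rw [← sub_eq_zero (a := exp _), h, div_eq_zero_iff, or_iff_left hlam]

lemma deriv_ne_zero (hB : 1 ≤ B) (haB : 4 * ‖a‖ ≤ B) (hlam : B ≤ ‖lam‖)
    (hzero : charFactor a lam = 0) : deriv (charFactor a) lam ≠ 0 := by
  have hlam0 : lam ≠ 0 := norm_pos_iff.1 (by linarith)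
  have hexp := (eq_zero_iff hlam0).1 hzero
  have hderiv : deriv (charFactor a) lam = a - lam - a / lam := by
    rw [(hasDerivAt a lam).deriv, hexp]
    field_simp
    ring
  have hdiv : ‖a / lam‖ ≤ 1 / 4 :=
    (norm_div_le_of_le_norm (by linarith) hlam).trans (by rw [div_le_iff₀ (by linarith)]; linarith)
  rw [hderiv]
  intro h
  have : ‖lam‖ ≤ ‖a‖ + ‖a / lam‖ :=
    calc ‖lam‖ = ‖a - a / lam‖ := congrArg norm (by linear_combination -h)
      _ ≤ ‖a‖ + ‖a / lam‖ := norm_sub_le _ _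
  linarith

end charFactor

noncomputable def rootShift (a c z : ℂ) : ℂ := -Complex.log (1 - a / (c + z))

namespace rootShift

open Complex

variable {a c z z₁ z₂ : ℂ} {B : ℝ}

lemma norm_le (hB : 0 < B) (haB : 2 * ‖a‖ ≤ B) (hz : B ≤ ‖c + z‖) :
    ‖rootShift a c z‖ ≤ 3 / 2 * (‖a‖ / B) := by
  have hdiv := norm_div_le_of_le_norm (a := a) hB hz
  have hhalf : ‖-(a / (c + z))‖ ≤ 1 / 2 := by
    rw [norm_neg]
    exact hdiv.trans (by rw [div_le_iff₀ hB]; linarith)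
  have := norm_log_one_add_half_le_self hhalf
  rw [norm_neg, ← sub_eq_add_neg] at this
  rw [rootShift, norm_neg]
  linarith

lemma norm_sub_le (hB : 1 ≤ B) (haB : 4 * ‖a‖ ≤ B) (hz₁ : B ≤ ‖c + z₁‖) (hz₂ : B ≤ ‖c + z₂‖) :
    ‖rootShift a c z₁ - rootShift a c z₂‖ ≤ 1 / 2 * ‖z₁ - z₂‖ := by
  have hB0 : 0 < B := by linarith
  have hmem {z : ℂ} (hz : B ≤ ‖c + z‖) : a / (c + z) ∈ closedBall (0 : ℂ) (1 / 2) := by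
    rw [mem_closedBall_zero_iff]
    exact (norm_div_le_of_le_norm hB0 hz).trans (by rw [div_le_iff₀ hB0]; linarith)
  have hne {z : ℂ} (hz : B ≤ ‖c + z‖) : c + z ≠ 0 := norm_pos_iff.1 (by linarith)
  have hlog := lipschitzOnWith_log_one_sub.norm_sub_le (hmem hz₂) (hmem hz₁)
  have hdiff : a / (c + z₂) - a / (c + z₁) = a * (z₁ - z₂) / ((c + z₁) * (c + z₂)) := by
    field_simp [hne hz₁, hne hz₂]
    ring
  have hprod : B * B ≤ ‖c + z₁‖ * ‖c + z₂‖ := mul_le_mul hz₁ hz₂ hB0.le (by linarith)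
  calc ‖rootShift a c z₁ - rootShift a c z₂‖
      = ‖log (1 - a / (c + z₂)) - log (1 - a / (c + z₁))‖ := by
        rw [rootShift, rootShift, neg_sub_neg]
    _ ≤ 2 * (‖a‖ * ‖z₁ - z₂‖ / (‖c + z₁‖ * ‖c + z₂‖)) := by
        rwa [hdiff, norm_div, norm_mul, norm_mul] at hlog
    _ ≤ 2 * (‖a‖ * ‖z₁ - z₂‖ / (B * B)) := by gcongr
    _ ≤ 1 / 2 * ‖z₁ - z₂‖ := by
        rw [mul_div_assoc', div_le_iff₀ (by positivity)]
        have haBB : 4 * ‖a‖ ≤ B * B := by nlinarith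
        nlinarith [mul_le_mul_of_nonneg_right haBB (norm_nonneg (z₁ - z₂))]

lemma isFixedPt_iff (hc : exp c = 1) (hz : ‖z‖ < Real.pi) (hcz : c + z ≠ 0)
    (hu : 1 - a / (c + z) ≠ 0) :
    Function.IsFixedPt (rootShift a c) z ↔ charFactor a (c + z) = 0 := by
  have him : |z.im| < Real.pi := (abs_im_le_norm z).trans_lt hz
  have hexp : exp (-(c + z)) = exp (-z) := by
    rw [neg_add, exp_add, exp_neg c, hc, inv_one, one_mul]
  rw [charFactor.eq_zero_iff hcz, hexp, Function.IsFixedPt, rootShift, neg_eq_iff_eq_neg]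
  constructor
  · intro h
    rw [← h, exp_log hu]
  · intro h
    rw [← h, log_exp] <;> simp only [neg_im] <;> linarith [abs_lt.1 him]

end rootShift

open Complex in
theorem exists_isUniqueSimpleZeroOn_closedBall {a c : ℂ} {r B : ℝ} (hr : 0 ≤ r)
    (hrπ : r < Real.pi) (hc : exp c = 1) (hB : 1 ≤ B) (h4a : 4 * ‖a‖ ≤ B)
    (h3a : 3 * ‖a‖ ≤ 2 * r * B) (hcB : B + r ≤ ‖c‖) :
    ∃ ρ, IsUniqueSimpleZeroOn (charFactor a) (closedBall c r) ρ ∧ ‖ρ - c‖ ≤ 3 / 2 * (‖a‖ / B) := by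
  set s := closedBall (0 : ℂ) r
  have hB0 : 0 < B := by linarith
  have hlarge : ∀ z ∈ s, B ≤ ‖c + z‖ := fun z hz => by
    have := norm_sub_norm_le c (-z)
    rw [sub_neg_eq_add, norm_neg] at this
    linarith [mem_closedBall_zero_iff.1 hz]
  have hshift : ∀ z ∈ s, ‖rootShift a c z‖ ≤ 3 / 2 * (‖a‖ / B) := fun z hz =>
    rootShift.norm_le hB0 (by linarith [norm_nonneg a]) (hlarge z hz)
  have hmaps : Set.MapsTo (rootShift a c) s s := fun z hz =>
    mem_closedBall_zero_iff.2 <| (hshift z hz).trans <| by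
      rw [mul_div_assoc', div_le_iff₀ hB0]; linarith
  have hcontr : ∀ z₁ ∈ s, ∀ z₂ ∈ s,
      ‖rootShift a c z₁ - rootShift a c z₂‖ ≤ 1 / 2 * ‖z₁ - z₂‖ := fun z₁ h₁ z₂ h₂ =>
    rootShift.norm_sub_le hB h4a (hlarge z₁ h₁) (hlarge z₂ h₂)
  have hzero_iff : ∀ z ∈ s, Function.IsFixedPt (rootShift a c) z ↔ charFactor a (c + z) = 0 := by
    intro z hz
    refine rootShift.isFixedPt_iff hc ((mem_closedBall_zero_iff.1 hz).trans_lt hrπ)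
      (norm_pos_iff.1 (by linarith [hlarge z hz])) fun hu => ?_
    have := norm_div_le_of_le_norm (a := a) hB0 (hlarge z hz)
    rw [← sub_eq_zero.1 hu, norm_one, le_div_iff₀ hB0, one_mul] at this
    linarith [norm_nonneg a]
  have hlip : LipschitzOnWith 2⁻¹ (rootShift a c) s :=
    LipschitzOnWith.of_dist_le_mul fun z₁ h₁ z₂ h₂ => by
      simpa [dist_eq_norm] using hcontr z₁ h₁ z₂ h₂
  obtain ⟨z₀, hz₀, hfix, -⟩ := ContractingWith.exists_fixedPoint'
    isClosed_closedBall.isComplete hmaps ⟨by norm_num, hlip.mapsToRestrict hmaps⟩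
    (mem_closedBall_self hr) (edist_ne_top _ _)
  have hmem_iff : ∀ w, w ∈ closedBall c r ↔ w - c ∈ s := fun w => by
    rw [mem_closedBall_iff_norm, mem_closedBall_zero_iff]
  have hρ : c + z₀ - c = z₀ := add_sub_cancel_left c z₀
  refine ⟨c + z₀, ⟨?_, (hzero_iff z₀ hz₀).1 hfix, ?_, fun w hw hzero => ?_⟩, ?_⟩
  · rwa [hmem_iff, hρ]
  · exact charFactor.deriv_ne_zero hB h4a (hlarge z₀ hz₀) ((hzero_iff z₀ hz₀).1 hfix)
  · rw [hmem_iff] at hw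
    have hfix' : Function.IsFixedPt (rootShift a c) (w - c) := by
      rwa [hzero_iff _ hw, add_sub_cancel]
    have := hcontr _ hw _ hz₀
    rw [hfix', hfix] at this
    have := norm_le_zero_iff.1 (by linarith [norm_nonneg (w - c - z₀)])
    linear_combination this
  · rw [hρ, ← hfix]
    exact hshift z₀ hz₀

lemma tendsto_norm_two_pi_I_mul_int_cofinite :
    Tendsto (fun k : ℤ => ‖2 * Real.pi * Complex.I * k‖) cofinite atTop := by
  have h : Tendsto (fun k : ℤ => ‖(k : ℝ)‖) cofinite atTop :=
    tendsto_norm_cocompact_atTop.comp Int.tendsto_coe_cofinite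
  refine (h.const_mul_atTop (by positivity : 0 < 2 * Real.pi)).congr fun k => ?_
  simp [Real.pi_nonneg, abs_of_nonneg]

theorem exists_root_chain {r : ℝ} (hr0 : 0 < r) (hrπ : r < Real.pi) (a : ℂ) :
    ∃ ρ : ℤ → ℂ,
      (∀ᶠ k : ℤ in cofinite,
        IsUniqueSimpleZeroOn (charFactor a) (closedBall (2 * Real.pi * Complex.I * k) r) (ρ k)) ∧
      Tendsto (fun k : ℤ => ρ k - 2 * Real.pi * Complex.I * k) cofinite (𝓝 0) := by
  set B : ℤ → ℝ := fun k => ‖2 * Real.pi * Complex.I * k‖ - r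
  have hB : Tendsto B cofinite atTop :=
    tendsto_atTop_add_const_right _ _ tendsto_norm_two_pi_I_mul_int_cofinite
  have hexists : ∀ᶠ k : ℤ in cofinite, ∃ ρ,
      IsUniqueSimpleZeroOn (charFactor a) (closedBall (2 * Real.pi * Complex.I * k) r) ρ ∧
        ‖ρ - 2 * Real.pi * Complex.I * k‖ ≤ 3 / 2 * (‖a‖ / B k) := by
    filter_upwards [hB.eventually_ge_atTop 1, hB.eventually_ge_atTop (4 * ‖a‖),
      hB.eventually_ge_atTop (3 * ‖a‖ / (2 * r))] with k h1 h4a h3a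
    refine exists_isUniqueSimpleZeroOn_closedBall hr0.le hrπ ?_ h1 h4a ?_ (by linarith)
    · simpa [mul_comm, mul_left_comm, mul_assoc] using Complex.exp_int_mul_two_pi_mul_I k
    · rw [div_le_iff₀ (by positivity)] at h3a
      linarith
  refine ⟨fun k => Classical.epsilon fun ρ =>
    IsUniqueSimpleZeroOn (charFactor a) (closedBall (2 * Real.pi * Complex.I * k) r) ρ ∧
      ‖ρ - 2 * Real.pi * Complex.I * k‖ ≤ 3 / 2 * (‖a‖ / B k), ?_, ?_⟩
  · filter_upwards [hexists] with k hk using (Classical.epsilon_spec hk).1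
  · have hbound : Tendsto (fun k => 3 / 2 * (‖a‖ / B k)) cofinite (𝓝 0) := by
      simpa only [mul_zero] using (tendsto_const_nhds.div_atTop hB).const_mul (3 / 2)
    refine squeeze_zero_norm' ?_ hbound
    filter_upwards [hexists] with k hk using (Classical.epsilon_spec hk).2

theorem two_root_chains_approach_each_other
    (r : ℝ) (hr0 : 0 < r) (hrπ : r < Real.pi) (α β : ℂ) :
    ∃ (N : ℕ) (root : ℂ → ℤ → ℂ),
      (∀ k : ℤ, (N : ℤ) ≤ |k| → ∀ a ∈ ({α, β} : Set ℂ),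
        root a k ∈ closedBall (2 * Real.pi * Complex.I * k) r ∧
        (a - root a k + root a k * Complex.exp (-root a k) = 0) ∧
        deriv (fun lam : ℂ => a - lam + lam * Complex.exp (-lam)) (root a k) ≠ 0 ∧
        (∀ w ∈ closedBall (2 * Real.pi * Complex.I * k) r,
          a - w + w * Complex.exp (-w) = 0 → w = root a k)) ∧
      Tendsto (fun k : ℤ => root α k - root β k) cofinite (𝓝 0) := by
  choose root hroot htendsto using exists_root_chain hr0 hrπ
  obtain ⟨N, hN⟩ := exists_nat_forall_le_abs_of_eventually_cofinite ((hroot α).and (hroot β))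
  refine ⟨N, root, fun k hk a ha => ?_, ?_⟩
  · rcases ha with rfl | rfl
    exacts [(hN k hk).1, (hN k hk).2]
  · simpa using (htendsto α).sub (htendsto β)
end
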